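/- Assume η ≠ 1/2, and let a and b be primitive axes of Jordan type η in A with a ≠ b and a·b ≠ 0. Then the element c = τ(a)(b) satisfies c = τ(b)(a), c is again a primitive axis of Jordan type η in A, and a·b = (η/2) • (a + b − c). -/

import Mathlib

/-!
Decompose `b = l • a + α + γ` in the grading of `a` and `a = l' • b + α' + γ'` in that of `b`, so
that `a * b = l • a + η • γ`. Expanding `b * (a * b)` once in each grading and comparing
components (using `b * b = b` to compute `b * γ`) gives `l² = l l'` and
`(l η + η / 2) γ = (l' (1 - η) + η²) γ`. Here `γ ≠ 0`, since otherwise `b` is a multiple of `a`;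
by symmetry and `η ≠ 1/2` this forces `l = l' = η / 2`. Then `τ(a) b = b - 2γ` and
`τ(b) a = a - 2γ'` agree because `a * b = b * a`, and `τ(a) b` is an axis because `τ(a)` is an
algebra automorphism.
-/

/-- The `lam`-eigenspace of the left-multiplication operator by `x`. -/
def eigSp (F : Type*) {A : Type*} [Field F] [NonUnitalNonAssocCommRing A] [Module F A]
    [SMulCommClass F A A] (x : A) (lam : F) : Submodule F A where
  carrier := {y | x * y = lam • y}
  add_mem' := by
    intro y z hy hz
    simp only [Set.mem_setOf_eq] at *
    rw [mul_add, hy, hz, smul_add]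
  zero_mem' := by simp
  smul_mem' := by
    intro c y hy
    simp only [Set.mem_setOf_eq] at *
    rw [mul_smul_comm, hy, smul_smul, smul_smul, mul_comm]

variable {F A : Type*} [Field F] [NonUnitalNonAssocCommRing A] [Module F A]
  [SMulCommClass F A A] [IsScalarTower F A A]

/-- `a` is a primitive axis of Jordan type `η`:  it is an idempotent, `A` is the internal
direct sum of the `1`-, `0`- and `η`-eigenspaces of `ad_a` with `A_1(a) = F • a` (expressed
as unique decomposition `x = φ • a + α + γ`), `A_0(a)` is a subalgebra, and the
`ℤ/2`-grading fusion rules hold for `A₊(a) = A_1(a) + A_0(a)`, `A₋(a) = A_η(a)`. -/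
structure IsPrimitiveAxis (η : F) (a : A) : Prop where
  idem : a * a = a
  prim : eigSp F a (1 : F) = Submodule.span F {a}
  decomp : ∀ x : A, ∃! t : F × A × A,
    t.2.1 ∈ eigSp F a (0 : F) ∧ t.2.2 ∈ eigSp F a η ∧ x = t.1 • a + t.2.1 + t.2.2
  zz : ∀ y ∈ eigSp F a (0 : F), ∀ z ∈ eigSp F a (0 : F), y * z ∈ eigSp F a (0 : F)
  pp : ∀ y ∈ eigSp F a (1 : F) ⊔ eigSp F a (0 : F),
       ∀ z ∈ eigSp F a (1 : F) ⊔ eigSp F a (0 : F),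
         y * z ∈ eigSp F a (1 : F) ⊔ eigSp F a (0 : F)
  pm : ∀ y ∈ eigSp F a (1 : F) ⊔ eigSp F a (0 : F), ∀ z ∈ eigSp F a η, y * z ∈ eigSp F a η
  mm : ∀ y ∈ eigSp F a η, ∀ z ∈ eigSp F a η,
         y * z ∈ eigSp F a (1 : F) ⊔ eigSp F a (0 : F)

/-- `τ` is the Miyamoto map of the axis `a`:  the `F`-linear map which is the identity on
`A_1(a) ⊔ A_0(a)` and `-1` on `A_η(a)`. -/
def IsMiyamotoMap (η : F) (a : A) (τ : A →ₗ[F] A) : Prop :=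
  (∀ y ∈ eigSp F a (1 : F) ⊔ eigSp F a (0 : F), τ y = y) ∧
  (∀ y ∈ eigSp F a η, τ y = -y)

open Submodule

section Automorphisms

omit [IsScalarTower F A A]

lemma mem_eigSp {x y : A} {lam : F} : y ∈ eigSp F x lam ↔ x * y = lam • y := Iff.rfl

section LinearEquiv

variable (e : A ≃ₗ[F] A) (he : ∀ x y, e (x * y) = e x * e y)
include he

lemma apply_mem_eigSp_apply_iff {x y : A} {lam : F} :
    e y ∈ eigSp F (e x) lam ↔ y ∈ eigSp F x lam := by
  rw [mem_eigSp, mem_eigSp, ← he, ← map_smul, e.injective.eq_iff]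

lemma eigSp_apply (x : A) (lam : F) :
    eigSp F (e x) lam = (eigSp F x lam).map (e : A →ₗ[F] A) := by
  ext y
  rw [mem_map_equiv, ← apply_mem_eigSp_apply_iff e he (y := e.symm y), e.apply_symm_apply]

omit [SMulCommClass F A A] in
lemma mul_mem_map {P Q R : Submodule F A} (h : ∀ y ∈ P, ∀ z ∈ Q, y * z ∈ R) :
    ∀ y ∈ P.map (e : A →ₗ[F] A), ∀ z ∈ Q.map (e : A →ₗ[F] A), y * z ∈ R.map (e : A →ₗ[F] A) := by
  rintro _ ⟨y, hy, rfl⟩ _ ⟨z, hz, rfl⟩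
  exact ⟨y * z, h y hy z hz, he y z⟩

theorem IsPrimitiveAxis.map {η : F} {b : A} (hb : IsPrimitiveAxis η b) :
    IsPrimitiveAxis η (e b) where
  idem := by rw [← he, hb.idem]
  prim := by rw [eigSp_apply e he, hb.prim, map_span, Set.image_singleton]; rfl
  decomp x := by
    refine (Equiv.existsUnique_congr
      (e := (Equiv.refl F).prodCongr (e.toEquiv.prodCongr e.toEquiv)) fun t => ?_).mp
      (hb.decomp (e.symm x))
    simp [apply_mem_eigSp_apply_iff e he, e.symm_apply_eq]
  zz := by simpa only [eigSp_apply e he] using mul_mem_map e he hb.zz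
  pp := by simpa only [eigSp_apply e he, ← Submodule.map_sup] using mul_mem_map e he hb.pp
  pm := by simpa only [eigSp_apply e he, ← Submodule.map_sup] using mul_mem_map e he hb.pm
  mm := by simpa only [eigSp_apply e he, ← Submodule.map_sup] using mul_mem_map e he hb.mm

end LinearEquiv

namespace IsPrimitiveAxis

variable {η : F} {a : A}

lemma self_mem_eigSp_one (ha : IsPrimitiveAxis η a) : a ∈ eigSp F a 1 := by
  rw [mem_eigSp, ha.idem, one_smul]

lemma smul_add_mem_sup (ha : IsPrimitiveAxis η a) (t : F) {α : A} (hα : α ∈ eigSp F a 0) :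
    t • a + α ∈ eigSp F a 1 ⊔ eigSp F a 0 :=
  add_mem (mem_sup_left (smul_mem _ t ha.self_mem_eigSp_one)) (mem_sup_right hα)

lemma exists_smul_add_of_mem_sup (ha : IsPrimitiveAxis η a) {x : A}
    (hx : x ∈ eigSp F a 1 ⊔ eigSp F a 0) : ∃ μ : F, ∃ δ ∈ eigSp F a 0, x = μ • a + δ := by
  obtain ⟨y, hy, δ, hδ, rfl⟩ := mem_sup.mp hx
  obtain ⟨μ, rfl⟩ := mem_span_singleton.mp (ha.prim ▸ hy)
  exact ⟨μ, δ, hδ, rfl⟩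

lemma eq_of_smul_add_add_eq (ha : IsPrimitiveAxis η a) {s t : F} {α γ β δ : A}
    (hα : α ∈ eigSp F a 0) (hγ : γ ∈ eigSp F a η)
    (hβ : β ∈ eigSp F a 0) (hδ : δ ∈ eigSp F a η)
    (h : s • a + α + γ = t • a + β + δ) : s = t ∧ α = β ∧ γ = δ := by
  obtain ⟨u, -, hu⟩ := ha.decomp (s • a + α + γ)
  simpa [Prod.ext_iff] using (hu (s, α, γ) ⟨hα, hγ, rfl⟩).trans (hu (t, β, δ) ⟨hβ, hδ, h⟩).symm

lemma mul_eq_of_eq_smul_add_add {b : A} {l : F} {α γ : A} (ha : IsPrimitiveAxis η a)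
    (hα : α ∈ eigSp F a 0) (hγ : γ ∈ eigSp F a η) (hb : b = l • a + α + γ) :
    a * b = l • a + η • γ := by
  rw [hb, mul_add, mul_add, mul_smul_comm, ha.idem, mem_eigSp.mp hα, mem_eigSp.mp hγ, zero_smul,
    add_zero]

lemma mul_mul_eq_of_eq_smul_add_add {b : A} {l : F} {α γ : A} (ha : IsPrimitiveAxis η a)
    (hα : α ∈ eigSp F a 0) (hγ : γ ∈ eigSp F a η) (hb : b = l • a + α + γ) :
    a * (a * b) = (l * (1 - η)) • a + η • (a * b) := by
  rw [ha.mul_eq_of_eq_smul_add_add hα hγ hb, mul_add, mul_smul_comm, mul_smul_comm, ha.idem,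
    mem_eigSp.mp hγ]
  module

end IsPrimitiveAxis

namespace IsMiyamotoMap

variable {η : F} {a : A} {τ : A →ₗ[F] A}

lemma exists_add_sub (ha : IsPrimitiveAxis η a) (hτ : IsMiyamotoMap η a τ) (x : A) :
    ∃ p ∈ eigSp F a 1 ⊔ eigSp F a 0, ∃ m ∈ eigSp F a η, x = p + m ∧ τ x = p - m := by
  obtain ⟨⟨t, α, γ⟩, ⟨hα, hγ, rfl⟩, -⟩ := ha.decomp x
  refine ⟨t • a + α, ha.smul_add_mem_sup t hα, γ, hγ, rfl, ?_⟩
  rw [map_add, hτ.1 _ (ha.smul_add_mem_sup t hα), hτ.2 _ hγ, sub_eq_add_neg]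

lemma apply_eq_sub (ha : IsPrimitiveAxis η a) (hτ : IsMiyamotoMap η a τ) {x α γ : A} {t : F}
    (hα : α ∈ eigSp F a 0) (hγ : γ ∈ eigSp F a η) (hx : x = t • a + α + γ) :
    τ x = x - (2 : F) • γ := by
  rw [hx, map_add, hτ.1 _ (ha.smul_add_mem_sup t hα), hτ.2 _ hγ]
  module

lemma involutive (ha : IsPrimitiveAxis η a) (hτ : IsMiyamotoMap η a τ) :
    Function.Involutive τ := by
  intro x
  obtain ⟨p, hp, m, hm, rfl, hτx⟩ := hτ.exists_add_sub ha x
  rw [hτx, map_sub, hτ.1 _ hp, hτ.2 _ hm, sub_neg_eq_add]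

lemma map_mul (ha : IsPrimitiveAxis η a) (hτ : IsMiyamotoMap η a τ) (x y : A) :
    τ (x * y) = τ x * τ y := by
  obtain ⟨p, hp, m, hm, rfl, hτx⟩ := hτ.exists_add_sub ha x
  obtain ⟨q, hq, n, hn, rfl, hτy⟩ := hτ.exists_add_sub ha y
  have hplus : p * q + m * n ∈ eigSp F a 1 ⊔ eigSp F a 0 :=
    add_mem (ha.pp p hp q hq) (ha.mm m hm n hn)
  have hminus : p * n + m * q ∈ eigSp F a η :=
    add_mem (ha.pm p hp n hn) (mul_comm q m ▸ ha.pm q hq m hm)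
  have hsplit : (p + m) * (q + n) = (p * q + m * n) + (p * n + m * q) := by noncomm_ring
  rw [hsplit, map_add, hτ.1 _ hplus, hτ.2 _ hminus, hτx, hτy]
  noncomm_ring

end IsMiyamotoMap

lemma IsPrimitiveAxis.miyamoto_apply {η : F} {a b : A} {τ : A →ₗ[F] A}
    (ha : IsPrimitiveAxis η a) (hb : IsPrimitiveAxis η b) (hτ : IsMiyamotoMap η a τ) :
    IsPrimitiveAxis η (τ b) :=
  hb.map (LinearEquiv.ofInvolutive τ (hτ.involutive ha)) (hτ.map_mul ha)

end Automorphisms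

lemma IsIdempotentElem.eq_of_eq_smul {a b : A} {k : F} (ha : IsIdempotentElem a)
    (hb : IsIdempotentElem b) (hb0 : b ≠ 0) (hba : b = k • a) : b = a := by
  have hkb : k • b = b := by
    calc k • b = k • (k • a) := by rw [hba]
      _ = b * b := by rw [hba, smul_mul_smul_comm, ha.eq, smul_smul]
      _ = b := hb.eq
  have hk : k = 1 := by
    have hk1 : (k - 1) • b = 0 := by rw [sub_smul, hkb, one_smul, sub_self]
    exact sub_eq_zero.mp ((smul_eq_zero.mp hk1).resolve_right hb0)
  rw [hba, hk, one_smul]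

section TwoAxes

variable {η : F} {a b : A} {l : F} {α γ : A}

namespace IsPrimitiveAxis

lemma coeffs_of_mul_self_eq_self (h2 : (2 : F) ≠ 0) (ha : IsPrimitiveAxis η a)
    (hbb : b * b = b) (hα : α ∈ eigSp F a 0) (hγ : γ ∈ eigSp F a η) (hb : b = l • a + α + γ)
    {μ : F} {δ : A} (hδ : δ ∈ eigSp F a 0) (hγγ : γ * γ = μ • a + δ) :
    l * l + μ = l ∧ α * γ = (2⁻¹ - l * η) • γ := by
  have haα : a * α = 0 := by rw [mem_eigSp.mp hα, zero_smul]
  have hsq : (l * l + μ) • a + (α * α + δ) + ((2 * (l * η)) • γ + (2 : F) • (α * γ)) =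
      l • a + α + γ := by
    rw [← hb, ← hbb]
    conv_rhs => rw [hb]
    simp only [add_mul, mul_add, smul_mul_assoc, mul_smul_comm, ha.idem, mul_comm α a, haα,
      mul_comm γ a, mem_eigSp.mp hγ, mul_comm γ α, hγγ]
    module
  have hαγ : α * γ ∈ eigSp F a η := ha.pm α (mem_sup_right hα) γ hγ
  obtain ⟨h1, -, hη⟩ := ha.eq_of_smul_add_add_eq (add_mem (ha.zz α hα α hα) hδ)
    (add_mem (smul_mem _ _ hγ) (smul_mem _ _ hαγ)) hα hγ hsq
  refine ⟨h1, ?_⟩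
  rw [(eq_inv_smul_iff₀ h2).mpr (eq_sub_of_add_eq' hη), smul_sub, smul_smul, ← mul_assoc,
    inv_mul_cancel₀ h2, one_mul, sub_smul]

lemma mul_eq_inv_two_smul_add_mul_self (h2 : (2 : F) ≠ 0) (ha : IsPrimitiveAxis η a)
    (hbb : b * b = b) (hα : α ∈ eigSp F a 0) (hγ : γ ∈ eigSp F a η) (hb : b = l • a + α + γ) :
    b * γ = (2 : F)⁻¹ • γ + γ * γ := by
  obtain ⟨μ, δ, hδ, hγγ⟩ := ha.exists_smul_add_of_mem_sup (ha.mm γ hγ γ hγ)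
  rw [hb, add_mul, add_mul, smul_mul_assoc, mem_eigSp.mp hγ,
    (ha.coeffs_of_mul_self_eq_self h2 hbb hα hγ hb hδ hγγ).2]
  module

end IsPrimitiveAxis

lemma coeff_relations (h2 : (2 : F) ≠ 0) (hη1 : η ≠ 1)
    (ha : IsPrimitiveAxis η a) (hb : IsPrimitiveAxis η b) {l' : F} {α' γ' : A}
    (hα : α ∈ eigSp F a 0) (hγ : γ ∈ eigSp F a η) (hbe : b = l • a + α + γ)
    (hα' : α' ∈ eigSp F b 0) (hγ' : γ' ∈ eigSp F b η) (hae : a = l' • b + α' + γ') :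
    l * l = l * l' ∧ (l * η + η / 2) • γ = (l' * (1 - η) + η * η) • γ := by
  obtain ⟨μ, δ, hδ, hγγ⟩ := ha.exists_smul_add_of_mem_sup (ha.mm γ hγ γ hγ)
  have hμ := (ha.coeffs_of_mul_self_eq_self h2 hb.idem hα hγ hbe hδ hγγ).1
  have hab := ha.mul_eq_of_eq_smul_add_add hα hγ hbe
  have hgrade_a : b * (a * b) = (l * l + η * μ) • a + η • δ + (l * η + η / 2) • γ := by
    rw [hab, mul_add, mul_smul_comm, mul_smul_comm, mul_comm b a, hab,
      ha.mul_eq_inv_two_smul_add_mul_self h2 hb.idem hα hγ hbe, hγγ]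
    module
  have hgrade_b : b * (a * b) =
      (l' * (1 - η) * l + η * l) • a + (l' * (1 - η)) • α + (l' * (1 - η) + η * η) • γ := by
    rw [mul_comm a b, hb.mul_mul_eq_of_eq_smul_add_add hα' hγ' hae, mul_comm b a, hab, hbe]
    module
  obtain ⟨hscalar, -, hvector⟩ := ha.eq_of_smul_add_add_eq (smul_mem _ _ hδ) (smul_mem _ _ hγ)
    (smul_mem _ _ hα) (smul_mem _ _ hγ) (hgrade_a.symm.trans hgrade_b)
  refine ⟨mul_right_cancel₀ (sub_ne_zero.mpr hη1.symm) ?_, hvector⟩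
  linear_combination hscalar - η * hμ

lemma eta_component_ne_zero (hη1 : η ≠ 1) (ha : IsPrimitiveAxis η a) (hb : IsPrimitiveAxis η b)
    (hne : a ≠ b) (hab : a * b ≠ 0) {l' : F} {α' γ' : A}
    (hα : α ∈ eigSp F a 0) (hγ : γ ∈ eigSp F a η) (hbe : b = l • a + α + γ)
    (hα' : α' ∈ eigSp F b 0) (hγ' : γ' ∈ eigSp F b η) (hae : a = l' • b + α' + γ')
    (hll' : l * l = l * l') : γ ≠ 0 := by
  rintro rfl
  have hab' : a * b = l • a := by
    rw [ha.mul_eq_of_eq_smul_add_add hα hγ hbe, smul_zero, add_zero]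
  have hl : l ≠ 0 := by
    rintro rfl
    exact hab (by rw [hab', zero_smul])
  have hl' : l' = l := (mul_left_cancel₀ hl hll').symm
  have hc : l * (1 - η) ≠ 0 := mul_ne_zero hl (sub_ne_zero.mpr hη1.symm)
  have hbab := hb.mul_mul_eq_of_eq_smul_add_add hα' hγ' hae
  rw [mul_comm b a, hab', mul_smul_comm, mul_comm b a, hab', hl'] at hbab
  have hba : b = ((l * (1 - η))⁻¹ * (l * l - η * l)) • a := by
    rw [← smul_smul, eq_inv_smul_iff₀ hc]
    linear_combination (norm := module) -hbab
  refine hne (IsIdempotentElem.eq_of_eq_smul ha.idem hb.idem ?_ hba).symm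
  rintro rfl
  exact hab (mul_zero a)

end TwoAxes

lemma eq_half_of_coeff_relations {η l l' : F} (h2 : (2 : F) ≠ 0) (hη0 : η ≠ 0)
    (hη2 : η ≠ 1 / 2) (h : l * l = l * l') (h' : l' * l' = l' * l)
    (hγ : l * η + η / 2 = l' * (1 - η) + η * η) : l = η / 2 ∧ l' = η / 2 := by
  have hhalf : η / 2 * 2 = η := div_mul_cancel₀ η h2
  have h21 : 2 * η - 1 ≠ 0 := fun h21 => hη2 (by rw [eq_div_iff h2]; linear_combination h21)
  have hl : l ≠ 0 := by
    rintro rfl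
    have hl' : l' = 0 := mul_self_eq_zero.mp (by rw [h', mul_zero])
    subst hl'
    exact h21 (mul_left_cancel₀ hη0 (by linear_combination hhalf - 2 * hγ))
  obtain rfl : l' = l := (mul_left_cancel₀ hl h).symm
  have hfactor : (2 * η - 1) * (2 * l' - η) = 0 := by linear_combination 2 * hγ - hhalf
  have hl' : l' = η / 2 := by
    rw [eq_div_iff h2]
    linear_combination (mul_eq_zero.mp hfactor).resolve_left h21
  exact ⟨hl', hl'⟩

/-- for `η ≠ 1/2` and distinct non-orthogonal primitive axes `a`, `b`,
`c = τ(a)(b)` satisfies `c = τ(b)(a)`, `c` is a primitive axis, and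
`a·b = (η/2) • (a + b − c)`. -/
theorem third_axis
    (h2 : (2 : F) ≠ 0) (η : F) (hη0 : η ≠ 0) (hη1 : η ≠ 1) (hη2 : η ≠ 1 / 2)
    (a b : A) (ha : IsPrimitiveAxis η a) (hb : IsPrimitiveAxis η b)
    (hne : a ≠ b) (hab : a * b ≠ 0)
    (τa τb : A →ₗ[F] A)
    (hτa : IsMiyamotoMap η a τa) (hτb : IsMiyamotoMap η b τb) :
    τa b = τb a ∧ IsPrimitiveAxis η (τa b) ∧
      a * b = (η / 2) • (a + b - τa b) := by
  obtain ⟨⟨l, α, γ⟩, ⟨hα, hγ, hbe⟩, -⟩ := ha.decomp b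
  obtain ⟨⟨l', α', γ'⟩, ⟨hα', hγ', hae⟩, -⟩ := hb.decomp a
  obtain ⟨hll', hγrel⟩ := coeff_relations h2 hη1 ha hb hα hγ hbe hα' hγ' hae
  obtain ⟨hl'l, -⟩ := coeff_relations h2 hη1 hb ha hα' hγ' hae hα hγ hbe
  have hγ0 : γ ≠ 0 := eta_component_ne_zero hη1 ha hb hne hab hα hγ hbe hα' hγ' hae hll'
  obtain ⟨rfl, rfl⟩ := eq_half_of_coeff_relations h2 hη0 hη2 hll' hl'l
    (smul_left_injective F hγ0 hγrel)
  have hhalf : η / 2 * 2 = η := div_mul_cancel₀ η h2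
  have hcomm : (η / 2) • a + η • γ = (η / 2) • b + η • γ' := by
    rw [← ha.mul_eq_of_eq_smul_add_add hα hγ hbe, ← hb.mul_eq_of_eq_smul_add_add hα' hγ' hae,
      mul_comm]
  have hτab : τa b = b - (2 : F) • γ := hτa.apply_eq_sub ha hα hγ hbe
  have hτba : τb a = a - (2 : F) • γ' := hτb.apply_eq_sub hb hα' hγ' hae
  refine ⟨smul_right_injective A hη0 ?_, ha.miyamoto_apply hb hτa, ?_⟩
  · rw [hτab, hτba]
    linear_combination (norm := module) (-2 : F) • hcomm - hhalf • (b - a)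
  · rw [ha.mul_eq_of_eq_smul_add_add hα hγ hbe, hτab]
    linear_combination (norm := module) -(hhalf • γ)
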